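/- The maximal cheating probability g_m for the m-round F_Q protocol is non-decreasing in m: g_m ≤ g_{m+1} for all m ≥ 2. (Given any strategy for m rounds, appending a final round in which Alice outputs y_{m+1} = 0 after having output y_m at round m, together with shifting so that the old final answer is committed via the new round, yields a strategy for m+1 rounds winning at least as often.) -/

import Mathlib

open Finset

/-- Embed the inputs x₁,…,xₙ (given as a vector) into a function ℕ → F (0 elsewhere). -/
def extendVec {F : Type*} [Field F] (n : ℕ) (v : Fin n → F) : ℕ → F :=
  fun i => if h : 1 ≤ i ∧ i ≤ n then v ⟨i - 1, by omega⟩ else 0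

/-- The recursively rolled-up check value: α₀ = d, αᵢ = yᵢ − xᵢ·αᵢ₋₁. -/
def alphaRec {F : Type*} [Field F] (d : F) (x y : ℕ → F) : ℕ → F
  | 0 => d
  | i + 1 => y (i + 1) - x (i + 1) * alphaRec d x y i

/-- The committed bit viewed as a field element. -/
def bitF (F : Type*) [Field F] (d : Bool) : F := if d then 1 else 0

/-- A valid (relativistic) cheating strategy: the round-1 answer depends only on x₁, and the
round-i answer depends only on d, x₁,…,x_{i−2} and xᵢ. -/
def ValidStrategy {F : Type*} [Field F] (S : ℕ → F → (ℕ → F) → F) : Prop :=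
  (∀ d d' x, S 1 d x = S 1 d' x) ∧
  (∀ i d x x', (∀ j, j + 2 ≤ i → x j = x' j) → x i = x' i → S i d x = S i d x')

/-- Winning condition of the m-round protocol P_m: y_m = α_{m−1}. -/
def winP {F : Type*} [Field F] (m : ℕ) (S : ℕ → F → (ℕ → F) → F)
    (d : Bool) (v : Fin (m - 1) → F) : Prop :=
  let x := extendVec (m - 1) v
  let y := fun i => S i (bitF F d) x
  y m = alphaRec (bitF F d) x y (m - 1)

/-- Winning condition of the symmetrized m-round protocol P'_m: y_m = x_m·α_{m−1}. -/
def winP' {F : Type*} [Field F] (m : ℕ) (S : ℕ → F → (ℕ → F) → F)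
    (d : Bool) (v : Fin m → F) : Prop :=
  let x := extendVec m v
  let y := fun i => S i (bitF F d) x
  y m = x m * alphaRec (bitF F d) x y (m - 1)

open scoped Classical in
/-- Winning probability of a strategy in P_m, for uniform d and x₁,…,x_{m−1}. -/
noncomputable def probP (F : Type*) [Field F] [Fintype F] [DecidableEq F]
    (m : ℕ) (S : ℕ → F → (ℕ → F) → F) : ℝ :=
  ((Finset.univ.filter (fun p : Bool × (Fin (m - 1) → F) => winP m S p.1 p.2)).card : ℝ) /
    (Fintype.card (Bool × (Fin (m - 1) → F)) : ℝ)

open scoped Classical in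
/-- Winning probability of a strategy in P'_m, for uniform d and x₁,…,x_m. -/
noncomputable def probP' (F : Type*) [Field F] [Fintype F] [DecidableEq F]
    (m : ℕ) (S : ℕ → F → (ℕ → F) → F) : ℝ :=
  ((Finset.univ.filter (fun p : Bool × (Fin m → F) => winP' m S p.1 p.2)).card : ℝ) /
    (Fintype.card (Bool × (Fin m → F)) : ℝ)

/-- g_m: Alice's maximal cheating probability in P_m. -/
noncomputable def gP (F : Type*) [Field F] [Fintype F] [DecidableEq F] (m : ℕ) : ℝ :=
  sSup {p : ℝ | ∃ S, ValidStrategy S ∧ p = probP F m S}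

/-- g'_m: Alice's maximal cheating probability in P'_m. -/
noncomputable def gP' (F : Type*) [Field F] [Fintype F] [DecidableEq F] (m : ℕ) : ℝ :=
  sSup {p : ℝ | ∃ S, ValidStrategy S ∧ p = probP' F m S}

/-!
From a valid strategy `S` for `P_m`, Alice builds one for `P_{m+1}`: she plays `S` in rounds
`1, …, m − 1` ignoring the fresh input `x_m`, answers `y_m = x_m · s_m` in round `m` and `y_{m+1} = 0`
in round `m + 1`. The final check of `P_{m+1}` then reads `0 = x_m · (s_m − α_{m−1})`, which holds
whenever `S` wins `P_m`, whatever `x_m` is. So every winning probability in `P_m` is attained in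
`P_{m+1}`, and `g_m ≤ g_{m+1}`.
-/

section Strategy

variable {F : Type*} [Field F]

lemma alphaRec_congr (d : F) {x x' y y' : ℕ → F} :
    ∀ {n : ℕ}, (∀ j, 1 ≤ j → j ≤ n → x j = x' j) → (∀ j, 1 ≤ j → j ≤ n → y j = y' j) →
      alphaRec d x y n = alphaRec d x' y' n
  | 0, _, _ => rfl
  | n + 1, hx, hy => by
    simp only [alphaRec]
    rw [alphaRec_congr d (fun j h1 h2 => hx j h1 (by omega)) (fun j h1 h2 => hy j h1 (by omega)),
      hx _ (by omega) le_rfl, hy _ (by omega) le_rfl]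

lemma extendVec_snoc_last (n : ℕ) (v : Fin n → F) (w : F) :
    extendVec (n + 1) (Fin.snoc v w : Fin (n + 1) → F) (n + 1) = w := by
  simp [extendVec, Fin.snoc]

lemma extendVec_snoc_of_ne {n j : ℕ} (v : Fin n → F) (w : F) (hj : j ≠ n + 1) :
    extendVec (n + 1) (Fin.snoc v w : Fin (n + 1) → F) j = extendVec n v j := by
  unfold extendVec
  by_cases h : 1 ≤ j ∧ j ≤ n
  · rw [dif_pos (by omega), dif_pos h]
    simp [Fin.snoc, show j - 1 < n by omega]
  · rw [dif_neg (by omega), dif_neg h]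

lemma update_extendVec_snoc (n : ℕ) (v : Fin n → F) (w : F) :
    Function.update (extendVec (n + 1) (Fin.snoc v w : Fin (n + 1) → F)) (n + 1) 0 =
      extendVec n v := by
  funext j
  rcases eq_or_ne j (n + 1) with rfl | hj
  · simp [extendVec]
  · rw [Function.update_of_ne hj, extendVec_snoc_of_ne v w hj]

def extendStrategy (m : ℕ) (S : ℕ → F → (ℕ → F) → F) : ℕ → F → (ℕ → F) → F :=
  fun i d x =>
    if i < m then S i d (Function.update x m 0)
    else if i = m then x m * S m d (Function.update x m 0)
    else 0

lemma ValidStrategy.extendStrategy {S : ℕ → F → (ℕ → F) → F} (hS : ValidStrategy S) (m : ℕ) :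
    ValidStrategy (extendStrategy m S) := by
  refine ⟨fun d d' x => ?_, fun i d x x' hx hi => ?_⟩
  · simp only [_root_.extendStrategy]
    split_ifs with h₁ h₂
    · exact hS.1 d d' _
    · subst h₂
      rw [hS.1 d d']
    · rfl
  · have hmasked : i ≤ m → S i d (Function.update x m 0) = S i d (Function.update x' m 0) := by
      refine fun him => hS.2 i d _ _ (fun j hj => ?_) ?_
      · rw [Function.update_of_ne (by omega), Function.update_of_ne (by omega), hx j hj]
      · rcases eq_or_ne i m with rfl | him'
        · simp
        · rw [Function.update_of_ne him', Function.update_of_ne him', hi]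
    simp only [_root_.extendStrategy]
    split_ifs with h₁ h₂
    · exact hmasked h₁.le
    · subst h₂
      rw [hi, hmasked le_rfl]
    · rfl

lemma winP_extendStrategy (S : ℕ → F → (ℕ → F) → F) {n : ℕ} (d : Bool) (v : Fin n → F) (w : F)
    (hwin : winP (n + 1) S d v) :
    winP (n + 2) (extendStrategy (n + 1) S) d (Fin.snoc v w : Fin (n + 1) → F) := by
  set e := bitF F d
  set x := extendVec (n + 1) (Fin.snoc v w : Fin (n + 1) → F)
  set y := fun i => extendStrategy (n + 1) S i e x
  have hwin : S (n + 1) e (extendVec n v) =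
      alphaRec e (extendVec n v) (fun i => S i e (extendVec n v)) n := hwin
  have hmask : Function.update x (n + 1) 0 = extendVec n v := update_extendVec_snoc n v w
  have halpha : alphaRec e x y n = alphaRec e (extendVec n v) (fun i => S i e (extendVec n v)) n :=
    alphaRec_congr _ (fun j _ hj => extendVec_snoc_of_ne v w (by omega))
      (fun j _ hj => by simp only [y, extendStrategy, if_pos (show j < n + 1 by omega), hmask])
  have hxw : x (n + 1) = w := extendVec_snoc_last n v w
  have hround : y (n + 1) = w * S (n + 1) e (extendVec n v) := by
    simp [y, extendStrategy, hmask, hxw]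
  have hlast : y (n + 2) = 0 := by
    simp [y, extendStrategy]
  show y (n + 2) = y (n + 1) - x (n + 1) * alphaRec e x y n
  rw [hlast, hround, halpha, hxw, ← hwin]
  ring

end Strategy

lemma card_filter_div_card_le_of_equiv {α β γ : Type*} [Fintype α] [Fintype β] [Fintype γ]
    [Nonempty β] (e : α × β ≃ γ) {P : α → Prop} {Q : γ → Prop} [DecidablePred P]
    [DecidablePred Q] (h : ∀ p, P p.1 → Q (e p)) :
    (#{a | P a} : ℝ) / Fintype.card α ≤ #{c | Q c} / Fintype.card γ := by
  have hcount : #{a | P a} * Fintype.card β ≤ #{c | Q c} := calc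
    _ = #((univ.filter P ×ˢ univ).map e.toEmbedding) := by
      rw [card_map, card_product, card_univ]
    _ ≤ _ := card_le_card fun c hc => by
      obtain ⟨p, hp, rfl⟩ := mem_map.1 hc
      exact mem_filter.2 ⟨mem_univ _, h p (mem_filter.1 (mem_product.1 hp).1).2⟩
  have hβ : (0 : ℝ) < Fintype.card β := by exact_mod_cast Fintype.card_pos
  calc (#{a | P a} : ℝ) / Fintype.card α
      = #{a | P a} * Fintype.card β / (Fintype.card α * Fintype.card β) :=
        (mul_div_mul_right _ _ hβ.ne').symm
    _ ≤ #{c | Q c} / (Fintype.card α * Fintype.card β) := by gcongr; exact_mod_cast hcount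
    _ = #{c | Q c} / Fintype.card γ := by
      rw [← Fintype.card_congr e, Fintype.card_prod, Nat.cast_mul]

section Probability

variable (F : Type*) [Field F] [Fintype F] [DecidableEq F]

lemma probP_le_probP_of_winP_snoc {n : ℕ} {S T : ℕ → F → (ℕ → F) → F}
    (h : ∀ d v w, winP (n + 1) S d v → winP (n + 2) T d (Fin.snoc v w : Fin (n + 1) → F)) :
    probP F (n + 1) S ≤ probP F (n + 2) T := by
  classical
  exact card_filter_div_card_le_of_equiv
    ((Equiv.prodAssoc _ _ _).trans
      ((Equiv.refl Bool).prodCongr ((Equiv.prodComm _ _).trans (Fin.snocEquiv fun _ => F))))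
    fun p hp => h p.1.1 p.1.2 p.2 hp

lemma probP_le_one (m : ℕ) (S : ℕ → F → (ℕ → F) → F) : probP F m S ≤ 1 := by
  classical
  exact div_le_one_of_le₀ (by exact_mod_cast card_filter_le _ _) (Nat.cast_nonneg _)

lemma probP_le_gP {m : ℕ} {S : ℕ → F → (ℕ → F) → F} (hS : ValidStrategy S) :
    probP F m S ≤ gP F m :=
  le_csSup ⟨1, by rintro p ⟨S, -, rfl⟩; exact probP_le_one F m S⟩ ⟨S, hS, rfl⟩

end Probability

/-- the maximal cheating probability g_m is non-decreasing: g_m ≤ g_{m+1}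
for all m ≥ 2. -/
theorem gP_mono (F : Type*) [Field F] [Fintype F] [DecidableEq F]
    (m : ℕ) (hm : 2 ≤ m) : gP F m ≤ gP F (m + 1) := by
  obtain ⟨n, rfl⟩ : ∃ n, m = n + 1 := ⟨m - 1, by omega⟩
  have hzero : ValidStrategy (fun _ _ _ => (0 : F)) := ⟨fun _ _ _ => rfl, fun _ _ _ _ _ _ => rfl⟩
  refine csSup_le ⟨_, _, hzero, rfl⟩ ?_
  rintro p ⟨S, hS, rfl⟩
  calc probP F (n + 1) S ≤ probP F (n + 2) (extendStrategy (n + 1) S) :=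
        probP_le_probP_of_winP_snoc F fun d v w => winP_extendStrategy S d v w
    _ ≤ gP F (n + 2) := probP_le_gP F (hS.extendStrategy (n + 1))
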